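/- Let R be a ring. The following statements are equivalent: (1) every minimal right ideal of R is a direct summand of R as a right R-module (R is right universally mininjective); (2) every simple right R-module is mininjective; (3) every minimal right ideal of R is mininjective; (4) for every a ∈ R such that aR is a minimal right ideal, the left ideal Ra is a direct summand of R as a left R-module; (5) every submodule of a mininjective right R-module is mininjective. -/

import Mathlib

universe u v w v'

open MulOpposite

section RightDefs
variable (R : Type u) [Ring R]

/-- A right `R`-module (i.e. an `Rᵐᵒᵖ`-module) `M` is mininjective if every homomorphism
from a minimal right ideal `I` of `R` into `M` extends to a homomorphism `R → M`. -/
def IsMininjective (M : Type v) [AddCommGroup M] [Module Rᵐᵒᵖ M] : Prop :=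
  ∀ I : Submodule Rᵐᵒᵖ R, IsAtom I → ∀ f : ↥I →ₗ[Rᵐᵒᵖ] M,
    ∃ g : R →ₗ[Rᵐᵒᵖ] M, ∀ x : ↥I, g ↑x = f x

/-- A right `R`-module `M` is min-projective if every short exact sequence
`0 → N → X → M → 0` with `N` mininjective splits (equivalently `Ext¹(M, N) = 0`
for every mininjective `N`). -/
def IsMinProjective (M : Type v) [AddCommGroup M] [Module Rᵐᵒᵖ M] : Prop :=
  ∀ (X : Type (max u v)) [AddCommGroup X] [Module Rᵐᵒᵖ X] (p : X →ₗ[Rᵐᵒᵖ] M),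
    Function.Surjective p → IsMininjective R ↥(LinearMap.ker p) →
      ∃ s : M →ₗ[Rᵐᵒᵖ] X, p ∘ₗ s = LinearMap.id

/-- `R` is right strongly min-coherent if every minimal right ideal of `R` is min-projective. -/
def RightStronglyMinCoherent : Prop :=
  ∀ I : Submodule Rᵐᵒᵖ R, IsAtom I → IsMinProjective R ↥I

/-- `R` is a right quasi V-ring if every simple right `R`-module which is not isomorphic to
any right ideal of `R` is injective. -/
def RightQuasiVRing : Prop :=
  ∀ (S : Type v) [AddCommGroup S] [Module Rᵐᵒᵖ S], IsSimpleModule Rᵐᵒᵖ S →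
    (¬ ∃ I : Submodule Rᵐᵒᵖ R, Nonempty (S ≃ₗ[Rᵐᵒᵖ] ↥I)) → Module.Injective Rᵐᵒᵖ S

/-- `R` is a right GV-ring if every simple right `R`-module is injective or projective. -/
def RightGVRing : Prop :=
  ∀ (S : Type v) [AddCommGroup S] [Module Rᵐᵒᵖ S], IsSimpleModule Rᵐᵒᵖ S →
    Module.Injective Rᵐᵒᵖ S ∨ Module.Projective Rᵐᵒᵖ S

/-- `R` is right Kasch if every simple right `R`-module is isomorphic to a right ideal of `R`. -/
def RightKasch : Prop :=
  ∀ (S : Type v) [AddCommGroup S] [Module Rᵐᵒᵖ S], IsSimpleModule Rᵐᵒᵖ S →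
    ∃ I : Submodule Rᵐᵒᵖ R, Nonempty (S ≃ₗ[Rᵐᵒᵖ] ↥I)

/-- A right `R`-module `M` is almost injective if for every monomorphism `i : A → B` and
every `f : A → M`, either `f` extends to `B`, or there are a nonzero direct summand `D` of
`B` (with projection `π : B → D`) and `h : M → D` with `h ∘ f = π ∘ i`. -/
def IsAlmostInjective (M : Type v) [AddCommGroup M] [Module Rᵐᵒᵖ M] : Prop :=
  ∀ (A B : Type w) [AddCommGroup A] [AddCommGroup B] [Module Rᵐᵒᵖ A] [Module Rᵐᵒᵖ B]
    (i : A →ₗ[Rᵐᵒᵖ] B), Function.Injective i → ∀ f : A →ₗ[Rᵐᵒᵖ] M,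
    (∃ g : B →ₗ[Rᵐᵒᵖ] M, g ∘ₗ i = f) ∨
    (∃ D : Submodule Rᵐᵒᵖ B, D ≠ ⊥ ∧ ∃ π : B →ₗ[Rᵐᵒᵖ] ↥D,
      π ∘ₗ D.subtype = LinearMap.id ∧ ∃ h : M →ₗ[Rᵐᵒᵖ] ↥D, h ∘ₗ f = π ∘ₗ i)

/-- `R` is a right almost V-ring if every simple right `R`-module is almost injective. -/
def RightAlmostVRing : Prop :=
  ∀ (S : Type v) [AddCommGroup S] [Module Rᵐᵒᵖ S], IsSimpleModule Rᵐᵒᵖ S →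
    IsAlmostInjective.{u, v, w} R S

/-- `R` is right serial if `R`, as a right `R`-module, is an internal direct sum of finitely
many uniserial submodules. -/
def RightSerial : Prop :=
  ∃ (n : ℕ) (c : Fin n → Submodule Rᵐᵒᵖ R), DirectSum.IsInternal c ∧
    ∀ i, ∀ N P : Submodule Rᵐᵒᵖ ↥(c i), N ≤ P ∨ P ≤ N

/-- `R` is left serial if `R`, as a left `R`-module, is an internal direct sum of finitely
many uniserial submodules. -/
def LeftSerial : Prop :=
  ∃ (n : ℕ) (c : Fin n → Submodule R R), DirectSum.IsInternal c ∧
    ∀ i, ∀ N P : Submodule R ↥(c i), N ≤ P ∨ P ≤ N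

/-- The square of the Jacobson radical of `R` is zero. -/
def JacobsonSquareZero : Prop :=
  ∀ x ∈ (⊥ : TwoSidedIdeal R).jacobson, ∀ y ∈ (⊥ : TwoSidedIdeal R).jacobson, x * y = 0

end RightDefs


section Aux

variable {R : Type u} [Ring R]

/-- Transfer mininjectivity along a linear equivalence. -/
lemma IsMininjective.congr {M M' : Type v} [AddCommGroup M] [Module Rᵐᵒᵖ M]
    [AddCommGroup M'] [Module Rᵐᵒᵖ M'] (e : M ≃ₗ[Rᵐᵒᵖ] M')
    (h : IsMininjective R M) : IsMininjective R M' := by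
  intro I hI f
  obtain ⟨g, hg⟩ := h I hI (e.symm.toLinearMap ∘ₗ f)
  exact ⟨e.toLinearMap ∘ₗ g, fun x => by
    simp only [LinearMap.comp_apply, hg x, LinearEquiv.coe_coe, LinearEquiv.apply_symm_apply]⟩

/-- If every minimal right ideal is a direct summand, every module is mininjective. -/
lemma isMininjective_of_compl
    (h1 : ∀ I : Submodule Rᵐᵒᵖ R, IsAtom I → ∃ J : Submodule Rᵐᵒᵖ R, IsCompl I J)
    (M : Type v) [AddCommGroup M] [Module Rᵐᵒᵖ M] : IsMininjective R M := by
  intro I hI f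
  obtain ⟨J, hJ⟩ := h1 I hI
  refine ⟨f ∘ₗ I.linearProjOfIsCompl J hJ, fun x => ?_⟩
  exact congrArg f (Submodule.projectionOnto_apply_left hJ x)

/-- Left multiplication by an element, as an endomorphism of `R` as a right module. -/
def lmulLeft (e : R) : R →ₗ[Rᵐᵒᵖ] R where
  toFun x := e * x
  map_add' := mul_add e
  map_smul' r x := by
    simp only [MulOpposite.smul_eq_mul_unop, RingHom.id_apply, mul_assoc]

/-- A right ideal generated by an idempotent is a direct summand. -/
lemma isCompl_span_op_of_idem (e : R) (he : e * e = e) :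
    ∃ J : Submodule Rᵐᵒᵖ R, IsCompl (Submodule.span Rᵐᵒᵖ ({e} : Set R)) J := by
  set p := Submodule.span Rᵐᵒᵖ ({e} : Set R)
  have hmem : ∀ x : R, e * x ∈ p := fun x => by
    have : (MulOpposite.op x) • e ∈ p :=
      Submodule.smul_mem _ _ (Submodule.mem_span_singleton_self e)
    simpa [MulOpposite.smul_eq_mul_unop] using this
  set g : R →ₗ[Rᵐᵒᵖ] ↥p := (lmulLeft e).codRestrict p (fun x => hmem x)
  have hproj : ∀ x : ↥p, g ↑x = x := by
    rintro ⟨x, hx⟩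
    obtain ⟨r, rfl⟩ := Submodule.mem_span_singleton.mp hx
    apply Subtype.ext
    show e * ((MulOpposite.op (MulOpposite.unop r)) • e) = _
    simp [MulOpposite.smul_eq_mul_unop, ← mul_assoc, he]
  exact ⟨LinearMap.ker g, LinearMap.isCompl_of_proj hproj⟩

/-- Right multiplication by an element, as an endomorphism of `R` as a left module. -/
def lmulRight (f : R) : R →ₗ[R] R where
  toFun x := x * f
  map_add' x y := add_mul x y f
  map_smul' r x := by simp [smul_eq_mul, mul_assoc]

/-- A left ideal generated by an idempotent is a direct summand. -/
lemma isCompl_span_of_idem (f : R) (hf : f * f = f) :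
    ∃ J : Submodule R R, IsCompl (Submodule.span R ({f} : Set R)) J := by
  set p := Submodule.span R ({f} : Set R)
  have hmem : ∀ x : R, x * f ∈ p := fun x => by
    have : x • f ∈ p := Submodule.smul_mem _ _ (Submodule.mem_span_singleton_self f)
    simpa [smul_eq_mul] using this
  set g : R →ₗ[R] ↥p := (lmulRight f).codRestrict p (fun x => hmem x)
  have hproj : ∀ x : ↥p, g ↑x = x := by
    rintro ⟨x, hx⟩
    obtain ⟨r, rfl⟩ := Submodule.mem_span_singleton.mp hx
    apply Subtype.ext
    show (r • f) * f = r • f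
    simp [smul_eq_mul, mul_assoc, hf]
  exact ⟨LinearMap.ker g, LinearMap.isCompl_of_proj hproj⟩

end Aux

/-- The following are equivalent: (1) every minimal right ideal of `R` is
a direct summand of `R` (`R` is right universally mininjective); (2) every simple right
`R`-module is mininjective; (3) every minimal right ideal of `R` is mininjective; (4) if
`aR` is a minimal right ideal then `Ra` is a direct summand of `R` as a left `R`-module;
(5) submodules of mininjective right `R`-modules are mininjective. -/
theorem universallyMininjective_tfae (R : Type u) [Ring R] :
    List.TFAE
      [ ∀ I : Submodule Rᵐᵒᵖ R, IsAtom I → ∃ J : Submodule Rᵐᵒᵖ R, IsCompl I J,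
        ∀ (S : Type u) [AddCommGroup S] [Module Rᵐᵒᵖ S], IsSimpleModule Rᵐᵒᵖ S →
          IsMininjective R S,
        ∀ I : Submodule Rᵐᵒᵖ R, IsAtom I → IsMininjective R ↥I,
        ∀ a : R, IsAtom (Submodule.span Rᵐᵒᵖ ({a} : Set R)) →
          ∃ J : Submodule R R, IsCompl (Submodule.span R ({a} : Set R)) J,
        ∀ (M : Type u) [AddCommGroup M] [Module Rᵐᵒᵖ M] (N : Submodule Rᵐᵒᵖ M),
          IsMininjective R M → IsMininjective R ↥N ] := by
  tfae_have 1 → 2 := fun h1 S _ _ _ => isMininjective_of_compl h1 S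
  tfae_have 1 → 5 := fun h1 M _ _ N _ => isMininjective_of_compl h1 ↥N
  tfae_have 2 → 3 := fun h2 I hI => h2 ↥I (isSimpleModule_iff_isAtom.mpr hI)
  tfae_have 3 → 1 := by
    intro h3 I hI
    obtain ⟨g, hg⟩ := h3 I hI I hI LinearMap.id
    exact ⟨LinearMap.ker g, LinearMap.isCompl_of_proj hg⟩
  tfae_have 1 → 4 := by
    intro h1 a ha
    obtain ⟨J, hJ⟩ := h1 _ ha
    set π := Submodule.linearProjOfIsCompl _ J hJ with hπ
    set e : R := ↑(π 1) with hedef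
    have hmem : e ∈ Submodule.span Rᵐᵒᵖ ({a} : Set R) := (π 1).2
    have hfix : ∀ x ∈ Submodule.span Rᵐᵒᵖ ({a} : Set R), e * x = x := by
      intro x hx
      have h1x : π x = ⟨x, hx⟩ := Submodule.linearProjOfIsCompl_apply_left hJ ⟨x, hx⟩
      have h2x : π x = (MulOpposite.op x) • π 1 := by
        rw [← map_smul]
        congr 1
        simp [MulOpposite.smul_eq_mul_unop]
      have := congrArg Subtype.val (h2x.symm.trans h1x)
      simpa [MulOpposite.smul_eq_mul_unop] using this
    obtain ⟨r, hr⟩ := Submodule.mem_span_singleton.mp hmem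
    set b := MulOpposite.unop r with hb
    have hab : a * b = e := by simpa [MulOpposite.smul_eq_mul_unop] using hr
    have hea : e * a = a := hfix a (Submodule.mem_span_singleton_self a)
    set f := b * a with hfdef
    have hf : f * f = f := by
      show (b * a) * (b * a) = b * a
      rw [mul_assoc, ← mul_assoc a b a, hab, hea]
    have haf : a * f = a := by
      rw [hfdef, ← mul_assoc, hab, hea]
    have hspan : Submodule.span R ({a} : Set R) = Submodule.span R ({f} : Set R) := by
      apply le_antisymm
      · exact (Submodule.span_singleton_le_iff_mem _ _).mpr <| Submodule.mem_span_singleton.mpr ⟨a, by simpa [smul_eq_mul] using haf⟩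
      · exact (Submodule.span_singleton_le_iff_mem _ _).mpr <| Submodule.mem_span_singleton.mpr ⟨b, by simp [smul_eq_mul, hfdef]⟩
    obtain ⟨J', hJ'⟩ := isCompl_span_of_idem f hf
    exact ⟨J', hspan ▸ hJ'⟩
  tfae_have 4 → 1 := by
    intro h4 I hI
    obtain ⟨a, haI, ha0⟩ := Submodule.exists_mem_ne_zero_of_ne_bot hI.1
    have hle : Submodule.span Rᵐᵒᵖ ({a} : Set R) ≤ I :=
      (Submodule.span_singleton_le_iff_mem _ _).mpr haI
    have hspan : Submodule.span Rᵐᵒᵖ ({a} : Set R) = I := by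
      rcases hI.le_iff.mp hle with h | h
      · exact absurd (h ▸ Submodule.mem_span_singleton_self a) (by simpa using ha0)
      · exact h
    obtain ⟨J, hJ⟩ := h4 a (hspan ▸ hI)
    set π := Submodule.linearProjOfIsCompl _ J hJ with hπ
    set f : R := ↑(π 1) with hfdef
    have hmem : f ∈ Submodule.span R ({a} : Set R) := (π 1).2
    have hfix : ∀ x ∈ Submodule.span R ({a} : Set R), x * f = x := by
      intro x hx
      have h1x : π x = ⟨x, hx⟩ := Submodule.linearProjOfIsCompl_apply_left hJ ⟨x, hx⟩
      have h2x : π x = x • π 1 := by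
        rw [← map_smul]
        congr 1
        simp [smul_eq_mul]
      have := congrArg Subtype.val (h2x.symm.trans h1x)
      simpa [smul_eq_mul] using this
    obtain ⟨c, hc⟩ := Submodule.mem_span_singleton.mp hmem
    have hca : c * a = f := by simpa [smul_eq_mul] using hc
    have haf : a * f = a := hfix a (Submodule.mem_span_singleton_self a)
    have hfca : a * (c * a) = a := by rw [hca]; exact haf
    set e := a * c with hedef
    have he : e * e = e := by
      show (a * c) * (a * c) = a * c
      rw [mul_assoc, ← mul_assoc c a c, ← mul_assoc a (c * a) c, hfca]
    have hspan2 : Submodule.span Rᵐᵒᵖ ({a} : Set R) = Submodule.span Rᵐᵒᵖ ({e} : Set R) := by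
      have hea : e * a = a := by rw [hedef, mul_assoc, hfca]
      apply le_antisymm
      · exact (Submodule.span_singleton_le_iff_mem _ _).mpr <| Submodule.mem_span_singleton.mpr
          ⟨MulOpposite.op a, by simpa [MulOpposite.smul_eq_mul_unop] using hea⟩
      · exact (Submodule.span_singleton_le_iff_mem _ _).mpr <| Submodule.mem_span_singleton.mpr
          ⟨MulOpposite.op c, by simp [MulOpposite.smul_eq_mul_unop, hedef]⟩
    obtain ⟨J', hJ'⟩ := isCompl_span_op_of_idem e he
    refine ⟨J', ?_⟩
    rwa [← hspan, hspan2]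
  tfae_have 5 → 3 := by
    intro h5 I hI
    set Q : ModuleCat.{u} Rᵐᵒᵖ := CategoryTheory.Injective.under (ModuleCat.of Rᵐᵒᵖ ↥I) with hQdef
    have hQinj : CategoryTheory.Injective Q := CategoryTheory.Injective.injective_under _
    set ι : ↥I →ₗ[Rᵐᵒᵖ] Q := (CategoryTheory.Injective.ι (ModuleCat.of Rᵐᵒᵖ ↥I)).hom with hι
    have hinj : Function.Injective ι :=
      (ModuleCat.mono_iff_injective
        (CategoryTheory.Injective.ι (ModuleCat.of Rᵐᵒᵖ ↥I))).mp inferInstance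
    have hQI : Module.Injective Rᵐᵒᵖ Q := by
      have : CategoryTheory.Injective (ModuleCat.of Rᵐᵒᵖ Q) := hQinj
      exact Module.injective_module_of_injective_object _ _
    have hQmin : IsMininjective R ↥Q := by
      intro J hJ g
      obtain ⟨h, hh⟩ := hQI.out J.subtype (Submodule.injective_subtype J) g
      exact ⟨h, fun x => hh x⟩
    have hrange := h5 ↥Q (LinearMap.range ι) hQmin
    exact IsMininjective.congr (LinearEquiv.ofInjective ι hinj).symm hrange
  tfae_finish
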